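/- Let C be the 3×3 matrix with rows (2, 0, −1), (0, 2, −1), (−1, −1, 3), so that W = (1/2)C⁻¹ = (1/16)·[[5,1,2],[1,5,2],[2,2,4]]. For every positive integer N, the minimum of (1/16)(5n₁² + 2n₁n₂ + 4n₁n₃ + 5n₂² + 4n₂n₃ + 4n₃²) over nonnegative integers n₁, n₂, n₃ with n₁ + n₂ + n₃ = N is attained at (n₁, n₂, n₃) = (N/3, N/3, N/3) if N ≡ 0 (mod 3), at ((N−1)/3, (N−1)/3, (N+2)/3) if N ≡ 1 (mod 3), and at ((N+1)/3, (N+1)/3, (N−2)/3) if N ≡ 2 (mod 3). In particular, for every nonnegative integer k, when passing from N = 3k+1 to N = 3k+2 the value of n₃ at the optimal point decreases from k+1 to k. -/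

import Mathlib

/-!
On the plane `n₀ + n₁ + n₂ = N`, put `s = n₀ + n₁` and `d = n₀ - n₁`; then
`16 · nᵀWn = 4N² - 4Ns + 3s² + 2d²` with `s ≡ d (mod 2)`. Over the reals this is least at
`s = 2N/3`, `d = 0`. For `N = 3k + 1` write `s = 2k + t`: the form becomes
`24k² + 16k + 4 + (3t² - 4t + 2d²)`, and `3t² - 4t + 2d² ≥ 0` on integers with `t ≡ d (mod 2)`,
because `t(3t - 4) ≥ 0` unless `t = 1`, and then `d` is odd. The case `N = 3k + 2` is the same
after `t ↦ -t`, and `N = 3k` is a sum of squares.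
-/

open Matrix BigOperators

/-- The quadratic form `(1/16)(5n₁² + 2n₁n₂ + 4n₁n₃ + 5n₂² + 4n₂n₃ + 4n₃²)`. -/
noncomputable def exampleEnergy (n : Fin 3 → ℤ) : ℝ :=
  (1 / 16 : ℝ) * (5 * (n 0 : ℝ) ^ 2 + 2 * (n 0 : ℝ) * (n 1 : ℝ) + 4 * (n 0 : ℝ) * (n 2 : ℝ)
    + 5 * (n 1 : ℝ) ^ 2 + 4 * (n 1 : ℝ) * (n 2 : ℝ) + 4 * (n 2 : ℝ) ^ 2)

/-- The optimal point for the example, depending on `N mod 3`. -/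
def exampleOpt (N : ℕ) : Fin 3 → ℤ :=
  if N % 3 = 0 then ![(N : ℤ) / 3, (N : ℤ) / 3, (N : ℤ) / 3]
  else if N % 3 = 1 then ![((N : ℤ) - 1) / 3, ((N : ℤ) - 1) / 3, ((N : ℤ) + 2) / 3]
  else ![((N : ℤ) + 1) / 3, ((N : ℤ) + 1) / 3, ((N : ℤ) - 2) / 3]

def exampleForm (n : Fin 3 → ℤ) : ℤ :=
  5 * n 0 ^ 2 + 2 * n 0 * n 1 + 4 * n 0 * n 2 + 5 * n 1 ^ 2 + 4 * n 1 * n 2 + 4 * n 2 ^ 2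

lemma exampleEnergy_eq_exampleForm_div (n : Fin 3 → ℤ) :
    exampleEnergy n = (exampleForm n : ℝ) / 16 := by
  simp only [exampleEnergy, exampleForm]
  push_cast
  ring

lemma exampleEnergy_le_of_exampleForm_le {m n : Fin 3 → ℤ} (h : exampleForm m ≤ exampleForm n) :
    exampleEnergy m ≤ exampleEnergy n := by
  rw [exampleEnergy_eq_exampleForm_div, exampleEnergy_eq_exampleForm_div]
  gcongr

lemma inv_example_matrix :
    (!![2, 0, -1; 0, 2, -1; -1, -1, 3] : Matrix (Fin 3) (Fin 3) ℝ)⁻¹ =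
      (8 : ℝ)⁻¹ • !![5, 1, 2; 1, 5, 2; 2, 2, 4] := by
  refine inv_eq_right_inv ?_
  rw [Matrix.mul_smul, mul_fin_three, one_fin_three]
  ext i j
  fin_cases i <;> fin_cases j <;> norm_num

lemma dotProduct_mulVec_example_matrix (x : Fin 3 → ℝ) :
    x ⬝ᵥ (((16 : ℝ)⁻¹ • !![5, 1, 2; 1, 5, 2; 2, 2, 4]) *ᵥ x) =
      (1 / 16 : ℝ) * (5 * x 0 ^ 2 + 2 * x 0 * x 1 + 4 * x 0 * x 2
        + 5 * x 1 ^ 2 + 4 * x 1 * x 2 + 4 * x 2 ^ 2) := by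
  simp only [dotProduct, smul_of, smul_cons, smul_eq_mul, mul_one, smul_empty, cons_mulVec,
    Fin.sum_univ_three, cons_val_zero, cons_val_one, cons_val, empty_mulVec, one_div]
  ring

lemma exampleForm_eq_of_sum_eq {n : Fin 3 → ℤ} {N : ℤ} (h : n 0 + n 1 + n 2 = N) :
    exampleForm n = 4 * N ^ 2 - 4 * N * (n 0 + n 1) + 3 * (n 0 + n 1) ^ 2 + 2 * (n 0 - n 1) ^ 2 := by
  rw [← h, exampleForm]
  ring

lemma four_mul_le_three_mul_sq_add_two_mul_sq {t d : ℤ} (h : t ≡ d [ZMOD 2]) :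
    4 * t ≤ 3 * t ^ 2 + 2 * d ^ 2 := by
  rcases (by omega : t ≤ 0 ∨ t = 1 ∨ 2 ≤ t) with ht | rfl | ht
  · nlinarith [sq_nonneg d]
  · have hd : d ≠ 0 := by rintro rfl; simp [Int.ModEq] at h
    have : 0 < d ^ 2 := by positivity
    linarith
  · nlinarith [sq_nonneg d]

lemma exampleForm_le_of_sum_eq_three_mul {k : ℤ} {n : Fin 3 → ℤ} (h : n 0 + n 1 + n 2 = 3 * k) :
    exampleForm ![k, k, k] ≤ exampleForm n := by
  rw [exampleForm_eq_of_sum_eq h, exampleForm]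
  simp only [cons_val]
  nlinarith [sq_nonneg (n 0 + n 1 - 2 * k), sq_nonneg (n 0 - n 1)]

lemma exampleForm_le_of_sum_eq_three_mul_add_one {k : ℤ} {n : Fin 3 → ℤ}
    (h : n 0 + n 1 + n 2 = 3 * k + 1) : exampleForm ![k, k, k + 1] ≤ exampleForm n := by
  have hquad := four_mul_le_three_mul_sq_add_two_mul_sq
    (t := n 0 + n 1 - 2 * k) (d := n 0 - n 1) (by rw [Int.ModEq]; omega)
  rw [exampleForm_eq_of_sum_eq h, exampleForm]
  simp only [cons_val]
  nlinarith

lemma exampleForm_le_of_sum_eq_three_mul_add_two {k : ℤ} {n : Fin 3 → ℤ}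
    (h : n 0 + n 1 + n 2 = 3 * k + 2) : exampleForm ![k + 1, k + 1, k] ≤ exampleForm n := by
  have hquad := four_mul_le_three_mul_sq_add_two_mul_sq
    (t := 2 * k + 2 - n 0 - n 1) (d := n 0 - n 1) (by rw [Int.ModEq]; omega)
  rw [exampleForm_eq_of_sum_eq h, exampleForm]
  simp only [cons_val]
  nlinarith

lemma exampleOpt_three_mul (k : ℕ) : exampleOpt (3 * k) = ![(k : ℤ), k, k] := by
  simp [exampleOpt]

lemma exampleOpt_three_mul_add_one (k : ℕ) :
    exampleOpt (3 * k + 1) = ![(k : ℤ), k, k + 1] := by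
  have hdiv : (3 * (k : ℤ) + 1 + 2) / 3 = k + 1 := by omega
  simp [exampleOpt, hdiv]

lemma exampleOpt_three_mul_add_two (k : ℕ) :
    exampleOpt (3 * k + 2) = ![(k : ℤ) + 1, k + 1, k] := by
  have hdiv : (3 * (k : ℤ) + 2 + 1) / 3 = k + 1 := by omega
  simp [exampleOpt, hdiv]

lemma exists_eq_three_mul_or (N : ℕ) : ∃ k, N = 3 * k ∨ N = 3 * k + 1 ∨ N = 3 * k + 2 :=
  ⟨N / 3, by omega⟩

lemma exampleOpt_nonneg (N : ℕ) (i : Fin 3) : 0 ≤ exampleOpt N i := by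
  obtain ⟨k, rfl | rfl | rfl⟩ := exists_eq_three_mul_or N <;>
    simp only [exampleOpt_three_mul, exampleOpt_three_mul_add_one, exampleOpt_three_mul_add_two] <;>
    fin_cases i <;> simp <;> positivity

lemma sum_exampleOpt (N : ℕ) : ∑ i, exampleOpt N i = N := by
  obtain ⟨k, rfl | rfl | rfl⟩ := exists_eq_three_mul_or N <;>
    simp [exampleOpt_three_mul, exampleOpt_three_mul_add_one, exampleOpt_three_mul_add_two,
      Fin.sum_univ_three] <;> ring

lemma exampleForm_exampleOpt_le (N : ℕ) {n : Fin 3 → ℤ} (h : ∑ i, n i = N) :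
    exampleForm (exampleOpt N) ≤ exampleForm n := by
  rw [Fin.sum_univ_three] at h
  obtain ⟨k, rfl | rfl | rfl⟩ := exists_eq_three_mul_or N <;> push_cast at h
  · rw [exampleOpt_three_mul]
    exact exampleForm_le_of_sum_eq_three_mul h
  · rw [exampleOpt_three_mul_add_one]
    exact exampleForm_le_of_sum_eq_three_mul_add_one h
  · rw [exampleOpt_three_mul_add_two]
    exact exampleForm_le_of_sum_eq_three_mul_add_two h

/-- **Example 2.3.** For `C = [[2,0,−1],[0,2,−1],[−1,−1,3]]` one has
`W = (1/2)C⁻¹ = (1/16)[[5,1,2],[1,5,2],[2,2,4]]`, the quadratic form `nᵀWn` is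
`exampleEnergy`, and for every positive integer `N` the constrained minimum over
nonnegative integer vectors with coordinate sum `N` is attained at `exampleOpt N`.
In particular, passing from `N = 3k+1` to `N = 3k+2`, the third coordinate of the
optimal point decreases from `k+1` to `k`. -/
theorem addition_spectra_redistribution_example
    (C W : Matrix (Fin 3) (Fin 3) ℝ)
    (hC : C = !![2, 0, -1; 0, 2, -1; -1, -1, 3])
    (hW : W = (2 : ℝ)⁻¹ • C⁻¹) :
    W = (16 : ℝ)⁻¹ • !![5, 1, 2; 1, 5, 2; 2, 2, 4] ∧
    (∀ n : Fin 3 → ℤ,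
      (fun i => (n i : ℝ)) ⬝ᵥ (W *ᵥ fun i => (n i : ℝ)) = exampleEnergy n) ∧
    (∀ N : ℕ, 0 < N →
      (∀ i, 0 ≤ exampleOpt N i) ∧ (∑ i, exampleOpt N i) = (N : ℤ) ∧
      ∀ n : Fin 3 → ℤ, (∀ i, 0 ≤ n i) → (∑ i, n i) = (N : ℤ) →
        exampleEnergy (exampleOpt N) ≤ exampleEnergy n) ∧
    ∀ k : ℕ, exampleOpt (3 * k + 1) 2 = (k : ℤ) + 1 ∧ exampleOpt (3 * k + 2) 2 = (k : ℤ) := by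
  have hW16 : W = (16 : ℝ)⁻¹ • !![5, 1, 2; 1, 5, 2; 2, 2, 4] := by
    rw [hW, hC, inv_example_matrix, smul_smul]
    norm_num
  refine ⟨hW16, fun n => ?_, fun N _ => ⟨exampleOpt_nonneg N, sum_exampleOpt N,
    fun n _ hn => exampleEnergy_le_of_exampleForm_le (exampleForm_exampleOpt_le N hn)⟩,
    fun k => ?_⟩
  · rw [hW16, dotProduct_mulVec_example_matrix, exampleEnergy]
  · simp [exampleOpt_three_mul_add_one, exampleOpt_three_mul_add_two]
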